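/- arXiv:2202.12610 — 4 statements merged into one kernel-verified Lean document; each statement's English description precedes it below -/
import Mathlib

section
/- Let p be a prime, k an even integer with k > 4, χ ∈ {-1,0,1}, and a ≤ b, a' ≤ b' nonnegative integers with a' ≤ a and b' < b. With F(a,b) = ∑_{ℓ=0}^{a} p^{ℓ(k-1)} ( ∑_{w=0}^{b-ℓ} p^{w(2k-3)} - χ p^{k-2} ∑_{w=0}^{b-ℓ-1} p^{w(2k-3)} ), one has F(a', b') < F(a, b). -/
open scoped BigOperators

/-- The local Siegel series `F_p(T, 3-k)` evaluated combinatorially: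
`F(a,b,χ) = ∑_{ℓ=0}^{a} p^{ℓ(k-1)} ( ∑_{w=0}^{b-ℓ} p^{w(2k-3)} - χ p^{k-2} ∑_{w=0}^{b-ℓ-1} p^{w(2k-3)} )`,
where sums with negative upper index are zero. -/
def siegelF (p k a b : ℕ) (χ : ℤ) : ℤ :=
  ∑ ℓ ∈ Finset.range (a + 1),
    if ℓ ≤ b then
      (p : ℤ) ^ (ℓ * (k - 1)) *
        ((∑ w ∈ Finset.range (b - ℓ + 1), (p : ℤ) ^ (w * (2 * k - 3))) -
          χ * (p : ℤ) ^ (k - 2) * ∑ w ∈ Finset.range (b - ℓ), (p : ℤ) ^ (w * (2 * k - 3)))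
    else 0

/-!
`F(a,b) = ∑_{ℓ ≤ a} p^{ℓ(k-1)} g(b-ℓ)` with `g(n) = S(n+1) - χ p^{k-2} S(n)`, where `S(n)` is
the partial geometric sum in `p^{2k-3}`. The increment
`g(n+1) - g(n) = p^{(n+1)(2k-3)} - χ p^{k-2+n(2k-3)}` is positive because `k - 2 < 2k - 3`
and `χ ≤ 1`, and `g(0) = 1`. So `g` is positive and strictly increasing, and passing from
`(a', b')` to `(a, b)` raises every common term and adds positive ones.
-/

open Finset

theorem Finset.sum_range_mul_sub_lt {R : Type*} [Ring R] [LinearOrder R] [IsStrictOrderedRing R]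
    {c f : ℕ → R} (hc : ∀ ℓ, 0 < c ℓ) (hf : StrictMono f) (hf_pos : ∀ n, 0 < f n)
    {a b a' b' : ℕ} (ha : a' ≤ a) (hb : b' < b) (hab' : a' ≤ b') :
    ∑ ℓ ∈ range (a' + 1), c ℓ * f (b' - ℓ) < ∑ ℓ ∈ range (a + 1), c ℓ * f (b - ℓ) :=
  calc ∑ ℓ ∈ range (a' + 1), c ℓ * f (b' - ℓ)
      < ∑ ℓ ∈ range (a' + 1), c ℓ * f (b - ℓ) := by
        refine sum_lt_sum_of_nonempty nonempty_range_add_one fun ℓ hℓ => ?_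
        have hℓ : ℓ ≤ a' := Nat.lt_succ_iff.mp (mem_range.mp hℓ)
        exact mul_lt_mul_of_pos_left (hf (by omega)) (hc ℓ)
    _ ≤ ∑ ℓ ∈ range (a + 1), c ℓ * f (b - ℓ) :=
        sum_le_sum_of_subset_of_nonneg (range_subset_range.mpr (by omega))
          fun ℓ _ _ => (mul_pos (hc ℓ) (hf_pos _)).le

section SiegelInner

variable (p k : ℕ) (χ : ℤ)

def siegelGeomSum (n : ℕ) : ℤ := ∑ w ∈ range n, (p : ℤ) ^ (w * (2 * k - 3))

def siegelInner (n : ℕ) : ℤ :=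
  siegelGeomSum p k (n + 1) - χ * (p : ℤ) ^ (k - 2) * siegelGeomSum p k n

theorem siegelF_eq_sum {a b : ℕ} (hab : a ≤ b) :
    siegelF p k a b χ
      = ∑ ℓ ∈ range (a + 1), (p : ℤ) ^ (ℓ * (k - 1)) * siegelInner p k χ (b - ℓ) := by
  refine sum_congr rfl fun ℓ hℓ => ?_
  have hℓb : ℓ ≤ b := by have := mem_range.mp hℓ; omega
  simp only [hℓb, if_true, siegelInner, siegelGeomSum]

theorem siegelInner_zero : siegelInner p k χ 0 = 1 := by
  simp [siegelInner, siegelGeomSum]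

theorem siegelInner_succ_sub (n : ℕ) :
    siegelInner p k χ (n + 1) - siegelInner p k χ n
      = (p : ℤ) ^ ((n + 1) * (2 * k - 3)) - χ * (p : ℤ) ^ (k - 2 + n * (2 * k - 3)) := by
  simp only [siegelInner, siegelGeomSum, sum_range_succ, pow_add]
  ring

variable {p k χ}

theorem mul_pow_lt_pow_succ_mul (hp : 2 ≤ p) (hk : 2 ≤ k) (hχ : χ ≤ 1) (n : ℕ) :
    χ * (p : ℤ) ^ (k - 2 + n * (2 * k - 3)) < (p : ℤ) ^ ((n + 1) * (2 * k - 3)) := by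
  have hp1 : (1 : ℤ) < p := by exact_mod_cast hp
  calc χ * (p : ℤ) ^ (k - 2 + n * (2 * k - 3))
      ≤ (p : ℤ) ^ (k - 2 + n * (2 * k - 3)) :=
        mul_le_of_le_one_left (by positivity) hχ
    _ < (p : ℤ) ^ ((n + 1) * (2 * k - 3)) :=
        pow_lt_pow_right₀ hp1 (by rw [add_one_mul n]; omega)

theorem siegelInner_strictMono (hp : 2 ≤ p) (hk : 2 ≤ k) (hχ : χ ≤ 1) :
    StrictMono (siegelInner p k χ) :=
  strictMono_nat_of_lt_succ fun n => by
    have := siegelInner_succ_sub p k χ n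
    have := mul_pow_lt_pow_succ_mul hp hk hχ n
    omega

theorem siegelInner_pos (hp : 2 ≤ p) (hk : 2 ≤ k) (hχ : χ ≤ 1) (n : ℕ) :
    0 < siegelInner p k χ n :=
  calc (0 : ℤ) < siegelInner p k χ 0 := by rw [siegelInner_zero]; exact one_pos
    _ ≤ siegelInner p k χ n := (siegelInner_strictMono hp hk hχ).monotone n.zero_le

end SiegelInner

theorem stmt6_general (p k : ℕ) (hp : p.Prime) (hk4 : 4 < k)
    (a b a' b' : ℕ) (hab : a ≤ b) (hab' : a' ≤ b') (ha : a' ≤ a) (hb : b' < b)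
    (χ : ℤ) (hχ : χ = -1 ∨ χ = 0 ∨ χ = 1) :
    siegelF p k a' b' χ < siegelF p k a b χ := by
  have hk : 2 ≤ k := by omega
  have hχ1 : χ ≤ 1 := by omega
  rw [siegelF_eq_sum p k χ hab', siegelF_eq_sum p k χ hab]
  exact Finset.sum_range_mul_sub_lt (fun ℓ => pow_pos (by exact_mod_cast hp.pos) _)
    (siegelInner_strictMono hp.two_le hk hχ1) (siegelInner_pos hp.two_le hk hχ1) ha hb hab'

/-- Strict monotonicity of the local Siegel series value: if `a' ≤ a`, `b' < b`,
`a' ≤ b'` and `a ≤ b`, then `F(a',b',χ) < F(a,b,χ)`. -/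
theorem stmt6 (p k : ℕ) (hp : p.Prime) (hk : Even k) (hk4 : 4 < k)
    (a b a' b' : ℕ) (hab : a ≤ b) (hab' : a' ≤ b') (ha : a' ≤ a) (hb : b' < b)
    (χ : ℤ) (hχ : χ = -1 ∨ χ = 0 ∨ χ = 1) :
    siegelF p k a' b' χ < siegelF p k a b χ :=
  stmt6_general p k hp hk4 a b a' b' hab hab' ha hb χ hχ
end

section
/- Let p be a prime, k an even integer with k > 4, and s, a, a' positive or zero integers with a' ≤ a ≤ a' + 2s. Then the rational number λ = p^{s(3-2k)} · (1 - p^{(2-k)(a'+1)}) / (1 - p^{(2-k)(a+1)}), written as a fraction in lowest terms, has denominator divisible by p. Equivalently, ν_p(λ) < 0. -/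
lemma aux_one_sub_ne (p : ℕ) (hp : p.Prime) {N : ℕ} (hN : 0 < N) :
    (1 - (p : ℚ) ^ (-(N : ℤ))) ≠ 0 := by
  have hp1 : (1 : ℚ) < p := by exact_mod_cast hp.one_lt
  have h : (p : ℚ) ^ (-(N : ℤ)) < 1 := by
    rw [zpow_neg, zpow_natCast, inv_lt_one_iff₀]
    right
    exact one_lt_pow₀ hp1 (by omega)
  intro h0
  rw [sub_eq_zero] at h0
  rw [← h0] at h
  exact lt_irrefl _ h

lemma aux_val_one_sub (p : ℕ) (hp : p.Prime) {N : ℕ} (hN : 0 < N) :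
    padicValRat p (1 - (p : ℚ) ^ (-(N : ℤ))) = -(N : ℤ) := by
  haveI : Fact p.Prime := ⟨hp⟩
  have h1 : (1 : ℕ) ≤ p ^ N := Nat.one_le_pow _ _ hp.pos
  have hp0 : (p : ℚ) ≠ 0 := by exact_mod_cast hp.ne_zero
  have key : (1 - (p : ℚ) ^ (-(N : ℤ))) = ((p ^ N - 1 : ℕ) : ℚ) / ((p ^ N : ℕ) : ℚ) := by
    rw [zpow_neg, zpow_natCast, Nat.cast_sub h1]
    push_cast
    field_simp
  rw [key]
  have h2 : 2 ≤ p ^ N := le_trans hp.two_le (Nat.le_self_pow (by omega) p)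
  have hnum : ((p ^ N - 1 : ℕ) : ℚ) ≠ 0 := by
    have : 0 < p ^ N - 1 := by omega
    exact_mod_cast this.ne'
  have hden : ((p ^ N : ℕ) : ℚ) ≠ 0 := by positivity
  rw [padicValRat.div hnum hden, padicValRat.of_nat, padicValRat.of_nat]
  have hv1 : padicValNat p (p ^ N - 1) = 0 := by
    apply padicValNat.eq_zero_of_not_dvd
    intro hdvd
    have hdvd2 : p ∣ p ^ N := dvd_pow_self p (by omega)
    have hsub : p ∣ p ^ N - (p ^ N - 1) := Nat.dvd_sub hdvd2 hdvd
    have h1' : p ^ N - (p ^ N - 1) = 1 := by omega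
    rw [h1'] at hsub
    exact hp.one_lt.ne' (Nat.dvd_one.mp hsub)
  have hv2 : padicValNat p (p ^ N) = N := padicValNat.prime_pow N
  rw [hv1, hv2]
  simp

lemma aux_dvd_den_of_val_neg (p : ℕ) (hp : p.Prime) {q : ℚ}
    (h : padicValRat p q < 0) : p ∣ q.den := by
  by_contra hnd
  have h0 : padicValNat p q.den = 0 := padicValNat.eq_zero_of_not_dvd hnd
  have : padicValRat p q = (padicValInt p q.num : ℤ) := by
    rw [padicValRat, h0]; simp
  rw [this] at h
  exact (Int.natCast_nonneg _).not_gt h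

/-- The special limit `λ = p^{s(3-2k)} (1-p^{(2-k)(a'+1)})/(1-p^{(2-k)(a+1)})`,
for a prime `p`, even `k > 4`, `s ≥ 1` and `a' ≤ a ≤ a' + 2s`, has `p`-adic
valuation strictly negative; equivalently its denominator in lowest terms is
divisible by `p`. -/
theorem stmt8 (p k s a a' : ℕ) (hp : p.Prime) (hk : Even k) (hk4 : 4 < k)
    (hs : 0 < s) (ha' : a' ≤ a) (ha : a ≤ a' + 2 * s) :
    p ∣ ((p : ℚ) ^ ((s : ℤ) * (3 - 2 * (k : ℤ))) *
          (1 - (p : ℚ) ^ ((2 - (k : ℤ)) * ((a' : ℤ) + 1))) /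
          (1 - (p : ℚ) ^ ((2 - (k : ℤ)) * ((a : ℤ) + 1)))).den ∧
    padicValRat p ((p : ℚ) ^ ((s : ℤ) * (3 - 2 * (k : ℤ))) *
          (1 - (p : ℚ) ^ ((2 - (k : ℤ)) * ((a' : ℤ) + 1))) /
          (1 - (p : ℚ) ^ ((2 - (k : ℤ)) * ((a : ℤ) + 1)))) < 0 := by
  haveI : Fact p.Prime := ⟨hp⟩
  have hp0 : (p : ℚ) ≠ 0 := by exact_mod_cast hp.ne_zero
  obtain ⟨m, rfl⟩ : ∃ m, k = m + 2 := ⟨k - 2, by omega⟩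
  have hm3 : 3 ≤ m := by omega
  set S : ℕ := s * (2 * m + 1) with hS
  set N' : ℕ := m * (a' + 1) with hN'
  set N : ℕ := m * (a + 1) with hN
  have e1 : (s : ℤ) * (3 - 2 * ((m + 2 : ℕ) : ℤ)) = -(S : ℤ) := by
    rw [hS]; push_cast; ring
  have e2 : (2 - ((m + 2 : ℕ) : ℤ)) * ((a' : ℤ) + 1) = -(N' : ℤ) := by
    rw [hN']; push_cast; ring
  have e3 : (2 - ((m + 2 : ℕ) : ℤ)) * ((a : ℤ) + 1) = -(N : ℤ) := by
    rw [hN]; push_cast; ring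
  rw [e1, e2, e3]
  have hA : (1 - (p : ℚ) ^ (-(N' : ℤ))) ≠ 0 := aux_one_sub_ne p hp (by positivity)
  have hB : (1 - (p : ℚ) ^ (-(N : ℤ))) ≠ 0 := aux_one_sub_ne p hp (by positivity)
  have hPz : (p : ℚ) ^ (-(S : ℤ)) ≠ 0 := zpow_ne_zero _ hp0
  have hvalP : padicValRat p ((p : ℚ) ^ (-(S : ℤ))) = -(S : ℤ) := by
    rw [zpow_neg, zpow_natCast]
    exact padicValRat.self_pow_inv S
  have hval : padicValRat p ((p : ℚ) ^ (-(S : ℤ)) *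
      (1 - (p : ℚ) ^ (-(N' : ℤ))) / (1 - (p : ℚ) ^ (-(N : ℤ)))) =
      -(S : ℤ) + -(N' : ℤ) - -(N : ℤ) := by
    rw [padicValRat.div (mul_ne_zero hPz hA) hB,
        padicValRat.mul hPz hA, hvalP,
        aux_val_one_sub p hp (show 0 < N' by positivity),
        aux_val_one_sub p hp (show 0 < N by positivity)]
  have hlt : N < S + N' := by
    rw [hS, hN, hN']
    nlinarith
  have hneg : padicValRat p ((p : ℚ) ^ (-(S : ℤ)) *
      (1 - (p : ℚ) ^ (-(N' : ℤ))) / (1 - (p : ℚ) ^ (-(N : ℤ)))) < 0 := by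
    rw [hval]
    have : (N : ℤ) < (S : ℤ) + (N' : ℤ) := by exact_mod_cast hlt
    omega
  exact ⟨aux_dvd_den_of_val_neg p hp hneg, hneg⟩
end

section
/- Let p be a prime and k > 4 an even integer. For nonnegative integers a' ≤ a ≤ a' + 2s (s ≥ 1 fixed) and χ, χ' ∈ {-1,0,1}, consider sequences F_j = F(a, b_j, χ) and F'_j = F(a', b_j - s, χ) of local Siegel series values, where b_j → ∞. Then F'_j / F_j → p^{s(3-2k)} · (1 - p^{(2-k)(a'+1)}) / (1 - p^{(2-k)(a+1)}) as j → ∞. -/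
open scoped BigOperators

open Filter

/-!
Write `A = p^(2k-3)`. Summing the two geometric series, the `ℓ`-th summand of `F(a,b,χ)` is
`p^(ℓ(k-1)) (A^(b-ℓ) (A - χ p^(k-2)) + χ p^(k-2) - 1) / (A - 1)`, so
`F(a,b,χ) / A^b → (A - χ p^(k-2)) / (A - 1) · ∑_{ℓ ≤ a} p^((2-k)ℓ)`.
The ratio `F'_j / F_j` is `A^(-s)` times a quotient of two such normalised values; the common
factor `(A - χ p^(k-2)) / (A - 1)` is nonzero since `χ ≤ 1`, and cancels, leaving a quotient of
two finite geometric sums in `p^(2-k)`.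
-/

open Finset Topology

def siegelSeries {R : Type*} [CommRing R] (q A c : R) (a b : ℕ) : R :=
  ∑ ℓ ∈ range (a + 1),
    if ℓ ≤ b then
      q ^ ℓ * ((∑ w ∈ range (b - ℓ + 1), A ^ w) - c * ∑ w ∈ range (b - ℓ), A ^ w)
    else 0

theorem siegelF_cast_eq_siegelSeries {R : Type*} [CommRing R] (p k a b : ℕ) (χ : ℤ) :
    (siegelF p k a b χ : R) =
      siegelSeries ((p : R) ^ (k - 1)) ((p : R) ^ (2 * k - 3)) (χ * (p : R) ^ (k - 2)) a b := by
  simp only [siegelF, siegelSeries, pow_mul']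
  push_cast
  rfl

section SiegelSeries

variable {𝕜 : Type*} [NormedField 𝕜]

theorem tendsto_geom_sum_sub_mul_geom_sum_div_pow {A : 𝕜} (c : 𝕜) (hA : 1 < ‖A‖) :
    Tendsto (fun n ↦ ((∑ w ∈ range (n + 1), A ^ w) - c * ∑ w ∈ range n, A ^ w) / A ^ n)
      atTop (𝓝 ((A - c) / (A - 1))) := by
  have hA0 : A ≠ 0 := norm_pos_iff.mp (one_pos.trans hA)
  have hA1 : A - 1 ≠ 0 := sub_ne_zero.mpr fun h ↦ by simp [h] at hA
  have hinv : Tendsto (fun n ↦ A⁻¹ ^ n) atTop (𝓝 0) :=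
    tendsto_pow_atTop_nhds_zero_of_norm_lt_one (by rw [norm_inv]; exact inv_lt_one_of_one_lt₀ hA)
  have hlim : Tendsto (fun n ↦ ((A - c) + (c - 1) * A⁻¹ ^ n) / (A - 1)) atTop
      (𝓝 (((A - c) + (c - 1) * 0) / (A - 1))) :=
    ((tendsto_const_nhds.mul hinv).const_add _).div_const _
  rw [mul_zero, add_zero] at hlim
  refine hlim.congr fun n ↦ ?_
  rw [geom_sum_eq (sub_ne_zero.mp hA1), geom_sum_eq (sub_ne_zero.mp hA1), inv_pow]
  field_simp
  ring

theorem tendsto_siegelSeries_div_pow (q : 𝕜) {A : 𝕜} (c : 𝕜) (hA : 1 < ‖A‖) (a : ℕ) :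
    Tendsto (fun b ↦ siegelSeries q A c a b / A ^ b) atTop
      (𝓝 ((A - c) / (A - 1) * ∑ ℓ ∈ range (a + 1), (q / A) ^ ℓ)) := by
  rw [Finset.mul_sum]
  simp only [siegelSeries, Finset.sum_div]
  refine tendsto_finsetSum _ fun ℓ _ ↦ ?_
  have hshift := (tendsto_geom_sum_sub_mul_geom_sum_div_pow c hA).comp (tendsto_sub_atTop_nat ℓ)
  rw [mul_comm]
  refine (hshift.const_mul ((q / A) ^ ℓ)).congr' ?_
  filter_upwards [eventually_ge_atTop ℓ] with b hb
  obtain ⟨n, rfl⟩ := Nat.exists_eq_add_of_le hb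
  simp only [Function.comp_apply, Nat.add_sub_cancel_left, le_add_iff_nonneg_right, zero_le,
    if_true, pow_add, div_pow, mul_div_mul_comm]

theorem tendsto_siegelSeries_shift_ratio (q : 𝕜) {A c : 𝕜} (hA : 1 < ‖A‖) (hc : c ≠ A)
    {a a' s : ℕ} (ha : ∑ ℓ ∈ range (a + 1), (q / A) ^ ℓ ≠ 0)
    {b : ℕ → ℕ} (hb : Tendsto b atTop atTop) :
    Tendsto (fun j ↦ siegelSeries q A c a' (b j - s) / siegelSeries q A c a (b j)) atTop
      (𝓝 (A⁻¹ ^ s * (∑ ℓ ∈ range (a' + 1), (q / A) ^ ℓ) / ∑ ℓ ∈ range (a + 1), (q / A) ^ ℓ)) := by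
  have hA0 : A ≠ 0 := norm_pos_iff.mp (one_pos.trans hA)
  have hD : (A - c) / (A - 1) ≠ 0 :=
    div_ne_zero (sub_ne_zero.mpr hc.symm) (sub_ne_zero.mpr fun h ↦ by simp [h] at hA)
  have hlim := ((tendsto_siegelSeries_div_pow q c hA a').comp
    ((tendsto_sub_atTop_nat s).comp hb)).const_mul (A⁻¹ ^ s) |>.div
    ((tendsto_siegelSeries_div_pow q c hA a).comp hb) (mul_ne_zero hD ha)
  rw [mul_left_comm, mul_div_mul_left _ _ hD] at hlim
  refine hlim.congr' ?_
  filter_upwards [hb.eventually (eventually_ge_atTop s)] with j hj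
  obtain ⟨m, hm⟩ := Nat.exists_eq_add_of_le' hj
  simp only [Pi.div_apply, Function.comp_apply, hm, Nat.add_sub_cancel, pow_add, inv_pow]
  field_simp

end SiegelSeries

theorem geom_sum_div_geom_sum {K : Type*} [Field K] {ρ : K} (hρ : ρ ≠ 1) (m n : ℕ) :
    (∑ i ∈ range m, ρ ^ i) / ∑ i ∈ range n, ρ ^ i = (1 - ρ ^ m) / (1 - ρ ^ n) := by
  rw [geom_sum_eq hρ, geom_sum_eq hρ, div_div_div_cancel_right₀ (sub_ne_zero.mpr hρ),
    ← neg_div_neg_eq, neg_sub, neg_sub]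

theorem stmt16_general (p k s a a' : ℕ) (hp : p.Prime) (hk4 : 4 < k)
    (χ : ℤ) (hχ : χ = -1 ∨ χ = 0 ∨ χ = 1)
    (b : ℕ → ℕ) (hb : Tendsto b atTop atTop) :
    Tendsto (fun j : ℕ => (siegelF p k a' (b j - s) χ : ℝ) / (siegelF p k a (b j) χ : ℝ))
      atTop
      (nhds ((p : ℝ) ^ ((s : ℤ) * (3 - 2 * (k : ℤ))) *
        (1 - (p : ℝ) ^ ((2 - (k : ℤ)) * ((a' : ℤ) + 1))) /
        (1 - (p : ℝ) ^ ((2 - (k : ℤ)) * ((a : ℤ) + 1))))) := by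
  have hx : (1 : ℝ) < p := by exact_mod_cast hp.one_lt
  have hx0 : (0 : ℝ) < p := one_pos.trans hx
  have hA : 1 < ‖(p : ℝ) ^ (2 * k - 3)‖ := by
    rw [Real.norm_of_nonneg (by positivity)]
    exact one_lt_pow₀ hx (by omega)
  have hc : (χ : ℝ) * (p : ℝ) ^ (k - 2) ≠ (p : ℝ) ^ (2 * k - 3) := by
    have hχ1 : (χ : ℝ) ≤ 1 := by exact_mod_cast (by omega : χ ≤ 1)
    have hlt : (p : ℝ) ^ (k - 2) < (p : ℝ) ^ (2 * k - 3) := pow_lt_pow_right₀ hx (by omega)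
    nlinarith [pow_pos hx0 (k - 2)]
  have hρ : (p : ℝ) ^ (k - 1) / (p : ℝ) ^ (2 * k - 3) = (p : ℝ) ^ (2 - (k : ℤ)) := by
    rw [← zpow_natCast, ← zpow_natCast, ← zpow_sub₀ hx0.ne']
    congr 1
    omega
  have hAinv : ((p : ℝ) ^ (2 * k - 3))⁻¹ ^ s = (p : ℝ) ^ ((s : ℤ) * (3 - 2 * (k : ℤ))) := by
    rw [inv_pow, ← pow_mul, ← zpow_natCast, ← zpow_neg, Nat.cast_mul, Nat.cast_sub (by omega)]
    push_cast
    ring_nf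
  have hρpow (n : ℕ) :
      ((p : ℝ) ^ (2 - (k : ℤ))) ^ (n + 1) = (p : ℝ) ^ ((2 - (k : ℤ)) * (n + 1)) := by
    rw [← zpow_natCast, ← zpow_mul]
    push_cast
    rfl
  have hρ1 : (p : ℝ) ^ (2 - (k : ℤ)) ≠ 1 := (zpow_lt_one_of_neg₀ hx (by omega)).ne
  simp only [siegelF_cast_eq_siegelSeries]
  convert tendsto_siegelSeries_shift_ratio (a := a) (a' := a') (s := s) _ hA hc
    (by rw [hρ]; positivity) hb using 2
  rw [mul_div_assoc, mul_div_assoc, hρ, geom_sum_div_geom_sum hρ1, hAinv, hρpow, hρpow]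

/-- If `b_j → ∞`, then the ratios `F(a', b_j - s, χ)/F(a, b_j, χ)` of local Siegel
series values converge to the special limit
`p^{s(3-2k)} (1-p^{(2-k)(a'+1)})/(1-p^{(2-k)(a+1)})`. -/
theorem stmt16 (p k s a a' : ℕ) (hp : p.Prime) (hk : Even k) (hk4 : 4 < k)
    (hs : 0 < s) (ha' : a' ≤ a) (ha : a ≤ a' + 2 * s)
    (χ : ℤ) (hχ : χ = -1 ∨ χ = 0 ∨ χ = 1)
    (b : ℕ → ℕ) (hb : Tendsto b atTop atTop) :
    Tendsto (fun j : ℕ => (siegelF p k a' (b j - s) χ : ℝ) / (siegelF p k a (b j) χ : ℝ))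
      atTop
      (nhds ((p : ℝ) ^ ((s : ℤ) * (3 - 2 * (k : ℤ))) *
        (1 - (p : ℝ) ^ ((2 - (k : ℤ)) * ((a' : ℤ) + 1))) /
        (1 - (p : ℝ) ^ ((2 - (k : ℤ)) * ((a : ℤ) + 1))))) :=
  stmt16_general p k s a a' hp hk4 χ hχ b hb
end

section
/- Let p be a prime, k > 4 even, and a' ≤ a ≤ a' + 2s nonnegative integers with s ≥ 1. The special limit λ = p^{s(3-2k)} (1 - p^{(2-k)(a'+1)})/(1 - p^{(2-k)(a+1)}) is not equal to any ratio F(a₁, b₁, χ)/F(a₂, b₂, χ) of local Siegel series values with b₁ < b₂, a₁ ≤ a₂ (both values integers). Indeed: F(a₂,b₂,χ) ≡ 1 mod p while λ in lowest terms has denominator divisible by p, so λ · F(a₂,b₂,χ) is never an integer, whereas F(a₁,b₁,χ) is. -/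
/-!
Reducing mod `p`, every `F(a, b, χ)` is `≡ 1` (for `k > 2` each other term carries a positive
power of `p`). On the other hand `λ = (p^m - 1) / (p^j (p^n - 1))` with `m = (k-2)(a'+1)`,
`n = (k-2)(a+1)` and `j = s(2k-3) + m - n`, and `a ≤ a' + 2s` forces `j > 0`. Cross-multiplying
`F₁ / F₂ = λ` and reducing mod `p` then gives `0 ≡ -F₂ ≡ -1`.
-/

open scoped BigOperators

theorem siegelF_cast_zmod_eq_one (p k a b : ℕ) (χ : ℤ) (hk : 2 < k) :
    ((siegelF p k a b χ : ℤ) : ZMod p) = 1 := by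
  simp [siegelF, Finset.sum_range_succ', show k - 1 ≠ 0 by omega, show 2 * k - 3 ≠ 0 by omega,
    show k - 2 ≠ 0 by omega]

theorem zpow_neg_mul_one_sub_div_eq {K : Type*} [Field K] {q : K} (hq : q ≠ 0) {E m n j : ℕ}
    (h : E + m = j + n) :
    q ^ (-(E : ℤ)) * (1 - q ^ (-(m : ℤ))) / (1 - q ^ (-(n : ℤ))) =
      (q ^ m - 1) / (q ^ j * (q ^ n - 1)) := by
  have hpow : q ^ E * q ^ m = q ^ j * q ^ n := by rw [← pow_add, h, pow_add]
  simp only [zpow_neg, zpow_natCast]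
  by_cases hn : q ^ n = 1
  · simp [hn]
  have : q ^ n - 1 ≠ 0 := sub_ne_zero.mpr hn
  have : 1 - (q ^ n)⁻¹ ≠ 0 := by
    rw [sub_ne_zero, ne_comm, inv_ne_one]; exact hn
  field_simp
  linear_combination (1 - q ^ m) * hpow

theorem intCast_div_ne_pow_sub_one_div {p : ℕ} (hp : 1 < p) {x y : ℤ} (hy : (y : ZMod p) = 1)
    {m n j : ℕ} (hm : 0 < m) (hn : 0 < n) (hj : 0 < j) :
    (x : ℚ) / y ≠ ((p : ℚ) ^ m - 1) / ((p : ℚ) ^ j * ((p : ℚ) ^ n - 1)) := by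
  have : Fact (1 < p) := ⟨hp⟩
  have hy0 : (y : ℚ) ≠ 0 := by
    rintro hy0
    simp [Int.cast_eq_zero.mp hy0] at hy
  have hden : (p : ℚ) ^ j * ((p : ℚ) ^ n - 1) ≠ 0 := by
    have : (1 : ℚ) < (p : ℚ) ^ n := one_lt_pow₀ (by exact_mod_cast hp) hn.ne'
    have : (0 : ℚ) < (p : ℚ) ^ j := by positivity
    positivity
  intro h
  rw [div_eq_div_iff hy0 hden] at h
  have hZ : x * ((p : ℤ) ^ j * ((p : ℤ) ^ n - 1)) = ((p : ℤ) ^ m - 1) * y := by exact_mod_cast h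
  have hmod : (0 : ZMod p) = -1 := by
    simpa [hy, hm.ne', hn.ne', hj.ne'] using congrArg (fun z : ℤ => (z : ZMod p)) hZ
  simp at hmod

theorem stmt19_general (p k s a a' : ℕ) (hp : p.Prime) (hk4 : 4 < k)
    (hs : 0 < s) (ha : a ≤ a' + 2 * s) :
    ∀ (a₁ a₂ b₁ b₂ : ℕ) (χ : ℤ), χ = -1 ∨ χ = 0 ∨ χ = 1 → b₁ < b₂ → a₁ ≤ a₂ →
      (siegelF p k a₁ b₁ χ : ℚ) / (siegelF p k a₂ b₂ χ : ℚ) ≠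
        (p : ℚ) ^ ((s : ℤ) * (3 - 2 * (k : ℤ))) *
          (1 - (p : ℚ) ^ ((2 - (k : ℤ)) * ((a' : ℤ) + 1))) /
          (1 - (p : ℚ) ^ ((2 - (k : ℤ)) * ((a : ℤ) + 1))) := by
  intro a₁ a₂ b₁ b₂ χ _ _ _
  obtain ⟨t, rfl⟩ : ∃ t, k = t + 3 := ⟨k - 3, by omega⟩
  -- `j > 0` below is `-ν_p(λ)`
  have hlt : (t + 1) * (a + 1) < s * (2 * t + 3) + (t + 1) * (a' + 1) := by nlinarith
  obtain ⟨j, hj⟩ : ∃ j, s * (2 * t + 3) + (t + 1) * (a' + 1) = j + (t + 1) * (a + 1) :=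
    ⟨_, (Nat.sub_add_cancel hlt.le).symm⟩
  have hE : (s : ℤ) * (3 - 2 * ((t + 3 : ℕ) : ℤ)) = -((s * (2 * t + 3) : ℕ) : ℤ) := by
    push_cast; ring
  have hm : (2 - ((t + 3 : ℕ) : ℤ)) * ((a' : ℤ) + 1) = -(((t + 1) * (a' + 1) : ℕ) : ℤ) := by
    push_cast; ring
  have hn : (2 - ((t + 3 : ℕ) : ℤ)) * ((a : ℤ) + 1) = -(((t + 1) * (a + 1) : ℕ) : ℤ) := by
    push_cast; ring
  rw [hE, hm, hn, zpow_neg_mul_one_sub_div_eq (by exact_mod_cast hp.ne_zero) hj]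
  exact intCast_div_ne_pow_sub_one_div hp.one_lt (siegelF_cast_zmod_eq_one _ _ _ _ _ (by omega))
    (by positivity) (by positivity) (by omega)

/-- A special limit `λ = p^{s(3-2k)} (1-p^{(2-k)(a'+1)})/(1-p^{(2-k)(a+1)})` is never
equal to a ratio `F(a₁,b₁,χ)/F(a₂,b₂,χ)` of local Siegel series values with
`b₁ < b₂` and `a₁ ≤ a₂`. -/
theorem stmt19 (p k s a a' : ℕ) (hp : p.Prime) (hk : Even k) (hk4 : 4 < k)
    (hs : 0 < s) (ha' : a' ≤ a) (ha : a ≤ a' + 2 * s) :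
    ∀ (a₁ a₂ b₁ b₂ : ℕ) (χ : ℤ), χ = -1 ∨ χ = 0 ∨ χ = 1 → b₁ < b₂ → a₁ ≤ a₂ →
      (siegelF p k a₁ b₁ χ : ℚ) / (siegelF p k a₂ b₂ χ : ℚ) ≠
        (p : ℚ) ^ ((s : ℤ) * (3 - 2 * (k : ℤ))) *
          (1 - (p : ℚ) ^ ((2 - (k : ℤ)) * ((a' : ℤ) + 1))) /
          (1 - (p : ℚ) ^ ((2 - (k : ℤ)) * ((a : ℤ) + 1))) :=
  stmt19_general p k s a a' hp hk4 hs ha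
end
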